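/- If r : A → B and s : B → A satisfy r ∘ s ∼ id_B, and for a point a : A the homotopy fiber of s ∘ r over a is contractible, then the homotopy fiber of s over a is contractible. -/
import Mathlib


universe u v

def idpath {A : Sort u} (a : A) : a = a := rfl

def pathscomp {A : Sort u} {a b c : A} (f : a = b) (g : b = c) : a = c :=
  match f with | rfl => g

def pathsinv {A : Sort u} {a b : A} (f : a = b) : b = a :=
  match f with | rfl => rfl

def maponpaths {A : Sort u} {B : Sort v} (f : A → B) {a a' : A} (p : a = a') :
    f a = f a' := congrArg f p

def transportf {B : Type u} (E : B → Type v) {b b' : B} (f : b = b') : E b → E b' :=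
  fun e => match f with | rfl => e

def transportb {B : Type u} (E : B → Type v) {b b' : B} (f : b = b') : E b' → E b :=
  transportf E (pathsinv f)

def iscontr (A : Sort u) : Prop := ∃ c : A, ∀ a : A, c = a

def isheq {A : Sort u} {B : Sort v} (f : A → B) : Prop :=
  ∃ g : B → A, (∀ b : B, f (g b) = b) ∧ (∀ a : A, g (f a) = a)

def hfiber {A : Type u} {B : Type v} (f : A → B) (b : B) : Type u :=
  Σ' a : A, f a = b

def isweq {A : Type u} {B : Type v} (f : A → B) : Prop :=
  ∀ b : B, iscontr (hfiber f b)

def isofhlevelP : Nat → Prop → Prop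
  | 0, A => iscontr A
  | n+1, A => ∀ a b : A, isofhlevelP n (a = b)

def isofhlevel : Nat → Sort u → Prop
  | 0, A => iscontr A
  | n+1, A => ∀ a b : A, isofhlevelP n (a = b)

theorem stmt9 {A : Type u} {B : Type v} (r : A → B) (s : B → A)
    (p : ∀ b : B, r (s b) = b) (a : A)
    (is : iscontr (hfiber (fun x : A => s (r x)) a)) :
    iscontr (hfiber s a) := by
  obtain ⟨⟨x0, h0⟩, hc⟩ := is
  refine ⟨⟨r x0, h0⟩, ?_⟩
  rintro ⟨b, e⟩
  have key : (⟨r (s b), (congrArg s (p b)).trans e⟩ : hfiber s a) = ⟨b, e⟩ := by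
    have gen : ∀ (b' : B) (q : b' = b), (⟨b', (congrArg s q).trans e⟩ : hfiber s a) = ⟨b, e⟩ := by
      rintro b' rfl; rfl
    exact gen _ (p b)
  have h1 := hc ⟨s b, (congrArg s (p b)).trans e⟩
  have h2 : (⟨r x0, h0⟩ : hfiber s a) = ⟨r (s b), (congrArg s (p b)).trans e⟩ := by
    cases h1; rfl
  exact h2.trans key
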